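/- (Macdonald positivity in the γ-Schur basis) Let α ≤ γ be compositions of n. Define the non-commutative Macdonald polynomial H_α(q,t) = Σ_{β ⊨ n} t^{c(α,β^c)} q^{c(α',←β)} R_β. Then H_α(q,t) = Σ_{β ≤ γ} t^{c(α,β^c)} q^{c(α',←β)} R_β^{(γ)}(t), where R_β^{(γ)}(t) = Σ_{δ ≥ β, D(β)\D(δ) ⊆ D(γ)} t^{c(β,δ^c)} R_δ. -/
import Mathlib


open Finset

noncomputable section

/-- The field `ℚ(q,t)`, realized as rational functions in `t` over `ℚ(q)`. -/
abbrev Fqt : Type := RatFunc (RatFunc ℚ)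

/-- The variable `q`. -/
def qq : Fqt := RatFunc.C RatFunc.X

/-- The variable `t`. -/
def tt : Fqt := RatFunc.X

/-- Descent sets of compositions of `n` are subsets of `{1,...,n-1}`. -/
def ground (n : ℕ) : Finset ℕ := Finset.Icc 1 (n - 1)

/-- `c(α,β) = Σ_{i ∈ D(α) ∩ D(β)} i`. -/
def cstat (A B : Finset ℕ) : ℕ := ∑ i ∈ A ∩ B, i

/-- Reversal of descent sets: `D(←β) = {n−i : i ∈ D(β)}`. -/
def rev (n : ℕ) (B : Finset ℕ) : Finset ℕ := B.image (fun i => n - i)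

/-- Conjugation of descent sets: `D(α') = {n−i : i ∈ {1,...,n-1}\D(α)}`. -/
def conj (n : ℕ) (A : Finset ℕ) : Finset ℕ := (ground n \ A).image (fun i => n - i)

/-- The degree-`n` component of `Sym_nc` as the free module with basis `{h_α}`. -/
def h : Finset ℕ → (Finset ℕ →₀ Fqt) := fun B => Finsupp.single B 1

/-- Ribbon Schur functions `R_α = Σ_{β ≥ α} (−1)^{ℓ(α)−ℓ(β)} h_β`. -/
def Rib (A : Finset ℕ) : Finset ℕ →₀ Fqt :=
  ∑ B ∈ A.powerset, ((-1 : Fqt) ^ (A.card - B.card)) • h B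

/-- Non-commutative Macdonald polynomials
`H_α(q,t) = Σ_{β ⊨ n} t^{c(α,β^c)} q^{c(α',←β)} R_β`. -/
def Mac (n : ℕ) (A : Finset ℕ) : Finset ℕ →₀ Fqt :=
  ∑ B ∈ (ground n).powerset,
    (tt ^ cstat A (ground n \ B) * qq ^ cstat (conj n A) (rev n B)) • Rib B

/-- `γ`-ribbon Schur functions
`R_β^{(γ)}(t) = Σ_{δ ≥ β, D(β)\D(δ) ⊆ D(γ)} t^{c(β,δ^c)} R_δ`. -/
def gSchur (n : ℕ) (G A : Finset ℕ) : Finset ℕ →₀ Fqt :=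
  ∑ B ∈ A.powerset.filter (fun B => A \ B ⊆ G), (tt ^ cstat A (ground n \ B)) • Rib B

lemma cstat_add (n : ℕ) (A G D : Finset ℕ) (hGA : G ⊆ A) :
    cstat A (ground n \ (D ∪ G)) + cstat (D ∪ G) (ground n \ D) = cstat A (ground n \ D) := by
  unfold cstat
  rw [← Finset.sum_union]
  · congr 1
    ext x
    simp only [Finset.mem_union, Finset.mem_inter, Finset.mem_sdiff]
    have := @hGA x
    tauto
  · rw [Finset.disjoint_left]
    intro x hx hx'
    simp only [Finset.mem_inter, Finset.mem_sdiff, Finset.mem_union] at hx hx'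
    tauto

lemma conj_rev_eq (n : ℕ) (A G D : Finset ℕ) (hA : A ⊆ ground n) (hGA : G ⊆ A) :
    cstat (conj n A) (rev n (D ∪ G)) = cstat (conj n A) (rev n D) := by
  unfold cstat
  congr 1
  have : conj n A ∩ rev n G = ∅ := by
    ext x
    simp only [conj, rev, Finset.mem_inter, Finset.mem_image, Finset.mem_sdiff,
      Finset.notMem_empty, iff_false, not_and]
    rintro ⟨i, ⟨hig, hiA⟩, rfl⟩ ⟨j, hj, hji⟩
    have hjA : j ∈ A := hGA hj
    have hjg : j ∈ ground n := hA hjA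
    simp only [ground, Finset.mem_Icc] at hig hjg
    have : i = j := by omega
    exact hiA (this ▸ hjA)
  rw [rev, Finset.image_union, ← rev, ← rev, Finset.inter_union_distrib_left, this,
    Finset.union_empty]

/-- Macdonald positivity in the `γ`-Schur basis: for `α ≤ γ` compositions of `n`,
`H_α(q,t) = Σ_{β ≤ γ} t^{c(α,β^c)} q^{c(α',←β)} R_β^{(γ)}(t)`,
where `β ≤ γ` means `D(γ) ⊆ D(β)`. -/
theorem stmt10 (n : ℕ) (G A : Finset ℕ)
    (hA : A ⊆ ground n) (hGA : G ⊆ A) :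
    Mac n A = ∑ B ∈ (ground n).powerset.filter (fun B => G ⊆ B),
      (tt ^ cstat A (ground n \ B) * qq ^ cstat (conj n A) (rev n B)) • gSchur n G B := by
  unfold Mac gSchur
  simp_rw [Finset.smul_sum, smul_smul]
  rw [Finset.sum_sigma']
  refine Finset.sum_nbij' (i := fun D => ⟨D ∪ G, D⟩) (j := fun p => p.2) ?_ ?_ ?_ ?_ ?_
  · intro D hD
    simp only [Finset.mem_powerset] at hD
    simp only [Finset.mem_sigma, Finset.mem_filter, Finset.mem_powerset]
    refine ⟨⟨Finset.union_subset hD (hGA.trans hA), Finset.subset_union_right⟩,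
      Finset.subset_union_left, ?_⟩
    rw [Finset.union_sdiff_left]
    exact Finset.sdiff_subset.trans (le_refl G)
  · rintro ⟨B, D⟩ hp
    simp only [Finset.mem_sigma, Finset.mem_filter, Finset.mem_powerset] at hp
    simp only [Finset.mem_powerset]
    exact hp.2.1.trans hp.1.1
  · intro D hD
    rfl
  · rintro ⟨B, D⟩ hp
    simp only [Finset.mem_sigma, Finset.mem_filter, Finset.mem_powerset] at hp
    obtain ⟨⟨hBg, hGB⟩, hDB, hBD⟩ := hp
    have : D ∪ G = B := by
      apply Finset.Subset.antisymm (Finset.union_subset hDB hGB)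
      intro x hx
      by_cases hxD : x ∈ D
      · exact Finset.mem_union_left _ hxD
      · exact Finset.mem_union_right _ (hBD (Finset.mem_sdiff.2 ⟨hx, hxD⟩))
    simp [this]
  · intro D hD
    simp only [Finset.mem_powerset] at hD
    have h1 := cstat_add n A G D hGA
    have h2 := conj_rev_eq n A G D hA hGA
    congr 1
    rw [h2, ← h1, pow_add]
    ring
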